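/- Suppose ε_p = R(P̃) − R(P̆) where R takes values in [0,1], R(P̃) = E_{w∼P̃}[R(w)], R(P̆) = E_{w∼P̆}[R(w)], and R(w) ≥ 1 − (c_b + c₂c_b I^{p−1})/Ω on the support of P̃ with R(w̃) − R(w) ≥ R(w̃)/c for all w in supp(P̆), w̃ in supp(P̃). Then ε_p ≥ C₁ · TV(P̃, P̆) with C₁ = (1 − (c_b + c₂c_b I^{p−1})/Ω)/c, provided c_b + c_b c₂ ≤ Ω, c > 0, I > 0, p ≤ 1. -/

import Mathlib

/-!
For `w̃` in the support of `P̃` and `w` in that of `P̆`, the gap hypothesis and the lower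
bound on `R w̃` give `R w̃ - R w ≥ R w̃ / c ≥ C₁`, so integrating over both supports yields
`ε_p ≥ C₁`. The constant `C₁` is nonnegative since `I ^ (p - 1) ≤ 1` and `c_b + c_b c₂ ≤ Ω`,
and `TV ≤ 1` finishes the proof.
-/

open MeasureTheory

/-- Total variation distance between two measures: `sup_A |P(A) - Q(A)|`
over measurable sets `A`. -/
noncomputable def tvDist {Ω : Type*} [MeasurableSpace Ω]
    (P Q : Measure Ω) : ℝ :=
  ⨆ A : {A : Set Ω // MeasurableSet A}, |(P A).toReal - (Q A).toReal|

lemma tvDist_le_one {W : Type*} [MeasurableSpace W] (P Q : Measure W)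
    [IsZeroOrProbabilityMeasure P] [IsZeroOrProbabilityMeasure Q] : tvDist P Q ≤ 1 :=
  haveI : Nonempty {A : Set W // MeasurableSet A} := ⟨⟨∅, .empty⟩⟩
  ciSup_le fun _ => abs_sub_le_of_nonneg_of_le ENNReal.toReal_nonneg measureReal_le_one
    ENNReal.toReal_nonneg measureReal_le_one

lemma ae_withDensity_ofReal_pos {W : Type*} [MeasurableSpace W] {μ : Measure W} {f : W → ℝ}
    (hf : Measurable f) : ∀ᵐ w ∂μ.withDensity (fun w => ENNReal.ofReal (f w)), 0 < f w :=
  (ae_withDensity_iff hf.ennreal_ofReal).2 <|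
    ae_of_all _ fun _ h => ENNReal.ofReal_pos.1 (pos_iff_ne_zero.2 h)

lemma integral_add_le_integral_of_ae_ae {X Y : Type*} [MeasurableSpace X] [MeasurableSpace Y]
    {P : Measure X} {Q : Measure Y} [IsProbabilityMeasure P] [IsProbabilityMeasure Q]
    {f : Y → ℝ} {g : X → ℝ} {a : ℝ} (hf : Integrable f Q) (hg : Integrable g P)
    (h : ∀ᵐ x ∂P, ∀ᵐ y ∂Q, f y + a ≤ g x) : ∫ y, f y ∂Q + a ≤ ∫ x, g x ∂P := by
  have hx : ∀ᵐ x ∂P, ∫ y, f y ∂Q + a ≤ g x := h.mono fun x hx => by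
    simpa [integral_add hf (integrable_const a)] using
      integral_mono_ae (hf.add (integrable_const a)) (integrable_const (g x)) hx
  simpa using integral_mono_ae (integrable_const _) hg hx

theorem privacy_leakage_bound_general {W : Type*} [MeasurableSpace W]
    (μ Ptilde Pbreve : Measure W)
    [IsProbabilityMeasure Ptilde] [IsProbabilityMeasure Pbreve]
    (ptilde pbreve : W → ℝ) (hpt : Measurable ptilde) (hpb : Measurable pbreve)
    (hPt : Ptilde = μ.withDensity (fun w => ENNReal.ofReal (ptilde w)))
    (hPb : Pbreve = μ.withDensity (fun w => ENNReal.ofReal (pbreve w)))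
    (R : W → ℝ) (hR : Measurable R) (hR01 : ∀ w, R w ∈ Set.Icc (0 : ℝ) 1)
    (cb c₂ Ω c p : ℝ) (I : ℕ)
    (hcb : 0 < cb) (hc₂ : 0 < c₂) (hΩ : 0 < Ω) (hc : 0 < c)
    (hI : 0 < I) (hp : p ≤ 1)
    (hdiam : cb + cb * c₂ ≤ Ω)
    (hRlb : ∀ wtilde, ptilde wtilde > 0 →
      R wtilde ≥ 1 - (cb + c₂ * cb * (I : ℝ) ^ (p - 1)) / Ω)
    (hgap : ∀ w wtilde, pbreve w > 0 → ptilde wtilde > 0 →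
      R wtilde - R w ≥ R wtilde / c)
    (εp : ℝ) (hεp : εp = ∫ w, R w ∂Ptilde - ∫ w, R w ∂Pbreve) :
    εp ≥ ((1 - (cb + c₂ * cb * (I : ℝ) ^ (p - 1)) / Ω) / c) * tvDist Ptilde Pbreve := by
  set α := 1 - (cb + c₂ * cb * (I : ℝ) ^ (p - 1)) / Ω
  have hα : 0 ≤ α := by
    have hIp : (I : ℝ) ^ (p - 1) ≤ 1 :=
      Real.rpow_le_one_of_one_le_of_nonpos (by exact_mod_cast hI) (by linarith)
    have : c₂ * cb * (I : ℝ) ^ (p - 1) ≤ c₂ * cb := mul_le_of_le_one_right (by positivity) hIp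
    rw [sub_nonneg, div_le_one hΩ]
    linarith
  have hRint : ∀ (ν : Measure W) [IsFiniteMeasure ν], Integrable R ν := fun _ _ =>
    .of_bound hR.aestronglyMeasurable 1 <| ae_of_all _ fun w =>
      abs_le.2 ⟨by linarith [(hR01 w).1], (hR01 w).2⟩
  have hgain : ∫ w, R w ∂Pbreve + α / c ≤ ∫ w, R w ∂Ptilde := by
    refine integral_add_le_integral_of_ae_ae (hRint _) (hRint _) ?_
    rw [hPt, hPb]
    filter_upwards [ae_withDensity_ofReal_pos hpt] with wt hwt
    filter_upwards [ae_withDensity_ofReal_pos hpb] with w hw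
    have : α / c ≤ R wt / c := div_le_div_of_nonneg_right (hRlb wt hwt) hc.le
    linarith [hgap w wt hw hwt]
  calc α / c * tvDist Ptilde Pbreve
      ≤ α / c := mul_le_of_le_one_right (by positivity) (tvDist_le_one _ _)
    _ ≤ εp := by rw [hεp]; linarith

/-- the privacy leakage `ε_p = R(P̃) - R(P̆)` satisfies
`ε_p ≥ C₁ · TV(P̃, P̆)` with `C₁ = (1 - (c_b + c₂ c_b I^{p-1})/Ω)/c`. -/
theorem privacy_leakage_bound {W : Type*} [MeasurableSpace W]
    (μ Ptilde Pbreve : Measure W)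
    [IsProbabilityMeasure Ptilde] [IsProbabilityMeasure Pbreve]
    (ptilde pbreve : W → ℝ) (hpt : Measurable ptilde) (hpb : Measurable pbreve)
    (hpt0 : ∀ w, 0 ≤ ptilde w) (hpb0 : ∀ w, 0 ≤ pbreve w)
    (hPt : Ptilde = μ.withDensity (fun w => ENNReal.ofReal (ptilde w)))
    (hPb : Pbreve = μ.withDensity (fun w => ENNReal.ofReal (pbreve w)))
    (R : W → ℝ) (hR : Measurable R) (hR01 : ∀ w, R w ∈ Set.Icc (0 : ℝ) 1)
    (cb c₂ Ω c p : ℝ) (I : ℕ)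
    (hcb : 0 < cb) (hc₂ : 0 < c₂) (hΩ : 0 < Ω) (hc : 0 < c)
    (hI : 0 < I) (hp : p ≤ 1)
    (hdiam : cb + cb * c₂ ≤ Ω)
    (hRlb : ∀ wtilde, ptilde wtilde > 0 →
      R wtilde ≥ 1 - (cb + c₂ * cb * (I : ℝ) ^ (p - 1)) / Ω)
    (hgap : ∀ w wtilde, pbreve w > 0 → ptilde wtilde > 0 →
      R wtilde - R w ≥ R wtilde / c)
    (εp : ℝ) (hεp : εp = ∫ w, R w ∂Ptilde - ∫ w, R w ∂Pbreve) :
    εp ≥ ((1 - (cb + c₂ * cb * (I : ℝ) ^ (p - 1)) / Ω) / c) * tvDist Ptilde Pbreve :=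
  privacy_leakage_bound_general μ Ptilde Pbreve ptilde pbreve hpt hpb hPt hPb R hR hR01 cb c₂ Ω c p
    I hcb hc₂ hΩ hc hI hp hdiam hRlb hgap εp hεp
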